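/- arXiv:2511.16897 — 3 statements merged into one kernel-verified Lean document; each statement's English description precedes it below -/
import Mathlib

section
/- Let f_0, …, f_{T−1} : K → ℝ be convex functions on a convex compact set K ⊆ ℝ^n with diameter D, and suppose each f_t admits a subgradient g_t at the iterate p^t with ‖g_t‖₂ ≤ G. Let p^{t+1} = Π_K(p^t − η g_t) be projected subgradient descent with constant step η > 0. Then for every p ∈ K, Σ_{t=0}^{T−1} f_t(p^t) − Σ_{t=0}^{T−1} f_t(p) ≤ D²/(2η) + (η/2)·Σ_{t=0}^{T−1} ‖g_t‖₂², and with η = D/(G√T) the average regret is at most DG/√T. -/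
open scoped RealInnerProductSpace

lemma proj_inner_aux {n : ℕ} {K : Set (EuclideanSpace ℝ (Fin n))} (hKc : Convex ℝ K)
    {x v : EuclideanSpace ℝ (Fin n)} (hv : v ∈ K)
    (hmin : ∀ y ∈ K, ‖v - x‖ ≤ ‖y - x‖) :
    ∀ w ∈ K, ⟪x - v, w - v⟫ ≤ 0 := by
  have hne : Nonempty K := ⟨⟨v, hv⟩⟩
  have h : ‖x - v‖ = ⨅ w : K, ‖x - w‖ := by
    apply le_antisymm
    · apply le_ciInf; intro w
      rw [norm_sub_rev, norm_sub_rev x (w : EuclideanSpace ℝ (Fin n))]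
      exact hmin w w.2
    · exact ciInf_le ⟨0, by rintro b ⟨w, rfl⟩; exact norm_nonneg _⟩ (⟨v, hv⟩ : K)
  exact (norm_eq_iInf_iff_real_inner_le_zero hKc hv).1 h

lemma step_bound {n : ℕ} {K : Set (EuclideanSpace ℝ (Fin n))} (hKc : Convex ℝ K)
    {η : ℝ} (hη : 0 < η) {pt pt1 gt q : EuclideanSpace ℝ (Fin n)}
    (hq : q ∈ K) (hpt1 : pt1 ∈ K)
    (hmin : ∀ y ∈ K, ‖pt1 - (pt - η • gt)‖ ≤ ‖y - (pt - η • gt)‖) :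
    ⟪gt, pt - q⟫ ≤ (‖pt - q‖ ^ 2 - ‖pt1 - q‖ ^ 2) / (2 * η) + (η / 2) * ‖gt‖ ^ 2 := by
  set x := pt - η • gt with hx
  have hinner : ⟪x - pt1, q - pt1⟫ ≤ 0 := proj_inner_aux hKc hpt1 hmin q hq
  have h1 : ‖pt1 - q‖ ^ 2 ≤ ‖x - q‖ ^ 2 := by
    have expand : ‖x - q‖ ^ 2 = ‖x - pt1‖ ^ 2 + ‖pt1 - q‖ ^ 2 + 2 * ⟪x - pt1, pt1 - q⟫ := by
      have : x - q = (x - pt1) + (pt1 - q) := by abel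
      rw [this, @norm_add_sq_real]; ring
    have : ⟪x - pt1, pt1 - q⟫ = -⟪x - pt1, q - pt1⟫ := by
      rw [← inner_neg_right]; congr 1; abel
    nlinarith [sq_nonneg ‖x - pt1‖]
  have h2 : ‖x - q‖ ^ 2 = ‖pt - q‖ ^ 2 - 2 * η * ⟪gt, pt - q⟫ + η ^ 2 * ‖gt‖ ^ 2 := by
    have hxq : x - q = (pt - q) - η • gt := by rw [hx]; abel
    rw [hxq, @norm_sub_sq_real, norm_smul, real_inner_smul_right, real_inner_comm]
    simp [abs_of_pos hη]; ring
  have h3 : ‖pt1 - q‖ ^ 2 ≤ ‖pt - q‖ ^ 2 - 2 * η * ⟪gt, pt - q⟫ + η ^ 2 * ‖gt‖ ^ 2 := by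
    linarith
  rw [div_add' _ _ _ (by positivity), le_div_iff₀ (by positivity : (0:ℝ) < 2 * η)]
  nlinarith [h3]

/-- Projected subgradient descent regret bound. On a convex compact
`K ⊆ ℝ^n` of diameter at most `D`, with convex losses `f t`, subgradients
`g t` at the iterates `p t` of norm at most `G`, and updates
`p (t+1) = Π_K (p t − η g t)`, for every `q ∈ K` the regret satisfies
`∑ f t (p t) − ∑ f t q ≤ D²/(2η) + (η/2) ∑ ‖g t‖²`; with `η = D/(G√T)` the
average regret is at most `D G / √T`. -/
theorem stmt8 {n : ℕ} (K : Set (EuclideanSpace ℝ (Fin n)))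
    (hKc : Convex ℝ K) (hKcpt : IsCompact K) (hKne : K.Nonempty)
    (T : ℕ) (hT : 0 < T) (D G η : ℝ) (hD : 0 ≤ D) (hG : 0 < G) (hη : 0 < η)
    (hdiam : ∀ x ∈ K, ∀ y ∈ K, ‖x - y‖ ≤ D)
    (f : ℕ → EuclideanSpace ℝ (Fin n) → ℝ)
    (hconv : ∀ t < T, ConvexOn ℝ K (f t))
    (p g : ℕ → EuclideanSpace ℝ (Fin n)) (hp0 : p 0 ∈ K)
    (hsubgrad : ∀ t < T, ∀ y ∈ K, f t (p t) + ⟪g t, y - p t⟫ ≤ f t y)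
    (hGbound : ∀ t < T, ‖g t‖ ≤ G)
    (hproj : ∀ t < T, p (t + 1) ∈ K ∧
      ∀ y ∈ K, ‖p (t + 1) - (p t - η • g t)‖ ≤ ‖y - (p t - η • g t)‖) :
    (∀ q ∈ K,
      (∑ t ∈ Finset.range T, f t (p t)) - (∑ t ∈ Finset.range T, f t q)
        ≤ D ^ 2 / (2 * η) + (η / 2) * ∑ t ∈ Finset.range T, ‖g t‖ ^ 2) ∧
    (η = D / (G * Real.sqrt T) → ∀ q ∈ K,
      (1 / (T : ℝ)) * ((∑ t ∈ Finset.range T, f t (p t))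
          - (∑ t ∈ Finset.range T, f t q))
        ≤ D * G / Real.sqrt T) := by
  have hmem : ∀ t, t ≤ T → p t ∈ K := by
    intro t
    induction t with
    | zero => intro _; exact hp0
    | succ k ih => intro h; exact (hproj k (by omega)).1
  have main : ∀ q ∈ K,
      (∑ t ∈ Finset.range T, f t (p t)) - (∑ t ∈ Finset.range T, f t q)
        ≤ D ^ 2 / (2 * η) + (η / 2) * ∑ t ∈ Finset.range T, ‖g t‖ ^ 2 := by
    intro q hq
    have step : ∀ t ∈ Finset.range T,
        f t (p t) - f t q ≤
          (‖p t - q‖ ^ 2 - ‖p (t+1) - q‖ ^ 2) / (2 * η) + (η / 2) * ‖g t‖ ^ 2 := by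
      intro t ht
      rw [Finset.mem_range] at ht
      have hsg := hsubgrad t ht q hq
      have : f t (p t) - f t q ≤ ⟪g t, p t - q⟫ := by
        have : ⟪g t, q - p t⟫ = -⟪g t, p t - q⟫ := by
          rw [← inner_neg_right]; congr 1; abel
        linarith [hsg, this ▸ hsg]
      calc f t (p t) - f t q ≤ ⟪g t, p t - q⟫ := this
        _ ≤ _ := step_bound hKc hη hq (hproj t ht).1 (hproj t ht).2
    have sum_step := Finset.sum_le_sum step
    rw [show (∑ t ∈ Finset.range T, f t (p t)) - (∑ t ∈ Finset.range T, f t q)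
        = ∑ t ∈ Finset.range T, (f t (p t) - f t q) from (Finset.sum_sub_distrib _ _).symm]
    have tel : ∑ t ∈ Finset.range T,
        ((‖p t - q‖ ^ 2 - ‖p (t+1) - q‖ ^ 2) / (2 * η) + (η / 2) * ‖g t‖ ^ 2)
        = (‖p 0 - q‖ ^ 2 - ‖p T - q‖ ^ 2) / (2 * η)
          + (η / 2) * ∑ t ∈ Finset.range T, ‖g t‖ ^ 2 := by
      rw [Finset.sum_add_distrib, ← Finset.sum_div, Finset.sum_range_sub',
        ← Finset.mul_sum]
    rw [tel] at sum_step
    have hd0 : ‖p 0 - q‖ ≤ D := hdiam _ hp0 _ hq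
    have hnum : ‖p 0 - q‖ ^ 2 - ‖p T - q‖ ^ 2 ≤ D ^ 2 := by
      nlinarith [norm_nonneg (p T - q), norm_nonneg (p 0 - q)]
    have hbd : (‖p 0 - q‖ ^ 2 - ‖p T - q‖ ^ 2) / (2 * η) ≤ D ^ 2 / (2 * η) := by
      gcongr
    linarith
  refine ⟨main, ?_⟩
  intro hηeq q hq
  have hTpos : (0:ℝ) < T := by exact_mod_cast hT
  have hsT : (0:ℝ) < Real.sqrt T := Real.sqrt_pos.mpr hTpos
  have hDpos : 0 < D := by
    by_contra h
    push_neg at h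
    have hD0 : D = 0 := le_antisymm h hD
    rw [hηeq, hD0] at hη
    simp at hη
  have hsum : ∑ t ∈ Finset.range T, ‖g t‖ ^ 2 ≤ T * G ^ 2 := by
    calc ∑ t ∈ Finset.range T, ‖g t‖ ^ 2 ≤ ∑ t ∈ Finset.range T, G ^ 2 := by
          apply Finset.sum_le_sum
          intro t ht
          rw [Finset.mem_range] at ht
          have := hGbound t ht
          nlinarith [norm_nonneg (g t)]
      _ = T * G ^ 2 := by rw [Finset.sum_const, Finset.card_range]; ring
  have hreg := main q hq
  have hTsq : Real.sqrt T * Real.sqrt T = T := Real.mul_self_sqrt hTpos.le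
  have hηval : η = D / (G * Real.sqrt T) := hηeq
  have hbound : D ^ 2 / (2 * η) + (η / 2) * ∑ t ∈ Finset.range T, ‖g t‖ ^ 2
      ≤ D * G * Real.sqrt T := by
    have h1 : D ^ 2 / (2 * η) = D * G * Real.sqrt T / 2 := by
      rw [hηval]
      field_simp
    have h2 : (η / 2) * ∑ t ∈ Finset.range T, ‖g t‖ ^ 2 ≤ D * G * Real.sqrt T / 2 := by
      have : (η / 2) * ∑ t ∈ Finset.range T, ‖g t‖ ^ 2 ≤ (η / 2) * (T * G ^ 2) := by
        apply mul_le_mul_of_nonneg_left hsum (by positivity)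
      have heq : (η / 2) * ((T:ℝ) * G ^ 2) = D * G * Real.sqrt T / 2 := by
        rw [hηval]
        field_simp
        linear_combination (-1 : ℝ) * hTsq
      linarith [heq ▸ this]
    linarith
  have hR : (∑ t ∈ Finset.range T, f t (p t)) - (∑ t ∈ Finset.range T, f t q)
      ≤ D * G * Real.sqrt T := le_trans hreg hbound
  have key : (1 / (T:ℝ)) * (D * G * Real.sqrt T) = D * G / Real.sqrt T := by
    rw [div_mul_eq_mul_div, one_mul, div_eq_div_iff hTpos.ne' hsT.ne']
    linear_combination (D * G) * hTsq
  calc (1 / (T : ℝ)) * ((∑ t ∈ Finset.range T, f t (p t))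
        - (∑ t ∈ Finset.range T, f t q))
      ≤ (1 / (T:ℝ)) * (D * G * Real.sqrt T) := by
        apply mul_le_mul_of_nonneg_left hR (by positivity)
    _ = D * G / Real.sqrt T := key
end

section
/- Let X_1,…,X_m be negatively associated {0,1}-valued random variables with E[X_i] = p_i, and let a_1,…,a_m ∈ [0,1] be fixed weights. Set Y = Σ_i a_i X_i and μ = Σ_i a_i p_i. Then for all z > 0, Pr[Y − μ ≥ z] ≤ exp(−2z²/Σ_i a_i²) and Pr[μ − Y ≥ z] ≤ exp(−2z²/Σ_i a_i²). -/
open MeasureTheory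

lemma bernoulli_mgf_bound {q : ℝ} (hq0 : 0 ≤ q) (hq1 : q ≤ 1) (s : ℝ) :
    1 - q + q * Real.exp s ≤ Real.exp (q * s + s ^ 2 / 8) := by
  set c : ℝ := 1 - q with hc
  have hc0 : 0 ≤ c := by simp only [hc]; linarith
  have hD : ∀ x : ℝ, 0 < c + q * Real.exp x := by
    intro x
    rcases eq_or_lt_of_le hq0 with h | h
    · simp only [hc, ← h]; norm_num
    · have := mul_pos h (Real.exp_pos x)
      linarith
  set φ' : ℝ → ℝ := fun x => q * Real.exp x / (c + q * Real.exp x) with hφ'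
  set h : ℝ → ℝ := fun x => q * x + x ^ 2 / 8 - Real.log (c + q * Real.exp x) with hh
  set g : ℝ → ℝ := fun x => q + x / 4 - φ' x with hg
  have hDume : ∀ x : ℝ, HasDerivAt (fun y => c + q * Real.exp y) (q * Real.exp x) x := by
    intro x
    exact ((Real.hasDerivAt_exp x).const_mul q).const_add c
  have hder : ∀ x : ℝ, HasDerivAt h (g x) x := by
    intro x
    have h1 : HasDerivAt (fun y => Real.log (c + q * Real.exp y)) (φ' x) x := by
      simpa [hφ'] using (hDume x).log (hD x).ne'
    have h2 : HasDerivAt (fun y : ℝ => q * y + y ^ 2 / 8) (q + 2 * x / 8) x := by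
      have := ((hasDerivAt_id x).const_mul q).add
        (((hasDerivAt_pow 2 x)).div_const 8)
      exact this.congr_deriv (by norm_num)
    have := h2.sub h1
    exact this.congr_deriv (by simp only [hg]; ring)
  have hgder : ∀ x : ℝ, HasDerivAt g (1 / 4 - c * (q * Real.exp x) / (c + q * Real.exp x) ^ 2) x := by
    intro x
    have hnum : HasDerivAt (fun y => q * Real.exp y) (q * Real.exp x) x :=
      (Real.hasDerivAt_exp x).const_mul q
    have hdiv : HasDerivAt φ' ((q * Real.exp x * (c + q * Real.exp x) -
        q * Real.exp x * (q * Real.exp x)) / (c + q * Real.exp x) ^ 2) x :=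
      hnum.div (hDume x) (hD x).ne'
    have h2 : HasDerivAt (fun y : ℝ => q + y / 4) (1 / 4) x := by
      simpa using (hasDerivAt_id x).div_const 4 |>.const_add q
    have := h2.sub hdiv
    exact this.congr_deriv (by ring)
  have hgmono : Monotone g := by
    apply monotone_of_hasDerivAt_nonneg hgder
    intro x
    have hd := hD x
    have he : 0 ≤ q * Real.exp x := mul_nonneg hq0 (Real.exp_pos x).le
    have key : 4 * (c * (q * Real.exp x)) ≤ (c + q * Real.exp x) ^ 2 := by
      nlinarith [sq_nonneg (c - q * Real.exp x)]
    have : c * (q * Real.exp x) / (c + q * Real.exp x) ^ 2 ≤ 1 / 4 := by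
      rw [div_le_div_iff₀ (by positivity) (by norm_num)]
      linarith
    simp only [Pi.zero_apply]
    linarith
  have hg0 : g 0 = 0 := by
    simp [hg, hφ', hc]
  have hh0 : h 0 = 0 := by
    simp [hh, hc]
  have hnonneg : ∀ x : ℝ, 0 ≤ h x := by
    intro x
    rcases le_or_gt 0 x with hx | hx
    · have hmono : MonotoneOn h (Set.Ici (0 : ℝ)) := by
        apply monotoneOn_of_hasDerivWithinAt_nonneg (convex_Ici 0)
          (fun y _ => (hder y).continuousAt.continuousWithinAt)
          (fun y _ => (hder y).hasDerivWithinAt)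
        intro y hy
        rw [interior_Ici] at hy
        rw [← hg0]
        exact hgmono hy.le
      have := hmono (Set.self_mem_Ici) hx hx
      rwa [hh0] at this
    · have hanti : AntitoneOn h (Set.Iic (0 : ℝ)) := by
        apply antitoneOn_of_hasDerivWithinAt_nonpos (convex_Iic 0)
          (fun y _ => (hder y).continuousAt.continuousWithinAt)
          (fun y _ => (hder y).hasDerivWithinAt)
        intro y hy
        rw [interior_Iic] at hy
        rw [← hg0]
        exact hgmono hy.le
      have := hanti hx.le (Set.self_mem_Iic) hx.le
      rwa [hh0] at this
  have := hnonneg s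
  have hlog : Real.log (c + q * Real.exp s) ≤ q * s + s ^ 2 / 8 := by
    simp only [hh] at this; linarith
  calc 1 - q + q * Real.exp s = c + q * Real.exp s := by rw [hc]
    _ ≤ Real.exp (q * s + s ^ 2 / 8) := by
        rw [← Real.exp_log (hD s)]
        exact Real.exp_le_exp.mpr hlog

lemma na_prod_exp {Ω : Type*} [MeasurableSpace Ω] (ℙ : Measure Ω)
    [IsProbabilityMeasure ℙ] {m : ℕ} (X : Fin m → Ω → ℝ)
    (hNA : ∀ (A B : Finset (Fin m)), Disjoint A B →
      ∀ f g : (Fin m → ℝ) → ℝ, Monotone f → Monotone g →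
      (∀ x y : Fin m → ℝ, (∀ i ∈ A, x i = y i) → f x = f y) →
      (∀ x y : Fin m → ℝ, (∀ i ∈ B, x i = y i) → g x = g y) →
      ∫ ω, f (fun i => X i ω) * g (fun i => X i ω) ∂ℙ
        ≤ (∫ ω, f (fun i => X i ω) ∂ℙ) * ∫ ω, g (fun i => X i ω) ∂ℙ)
    (c : Fin m → ℝ) (hc : (∀ i, 0 ≤ c i) ∨ (∀ i, c i ≤ 0)) (A : Finset (Fin m)) :
    ∫ ω, ∏ i ∈ A, Real.exp (c i * X i ω) ∂ℙ
      ≤ ∏ i ∈ A, ∫ ω, Real.exp (c i * X i ω) ∂ℙ := by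
  induction A using Finset.induction_on with
  | empty => simp
  | insert j s hj IH =>
    set f : (Fin m → ℝ) → ℝ := fun x => Real.exp (c j * x j) with hf
    set g : (Fin m → ℝ) → ℝ := fun x => ∏ i ∈ s, Real.exp (c i * x i) with hg
    have hfA : ∀ x y : Fin m → ℝ, (∀ i ∈ ({j} : Finset (Fin m)), x i = y i) → f x = f y := by
      intro x y h
      simp only [hf, h j (Finset.mem_singleton_self j)]
    have hgB : ∀ x y : Fin m → ℝ, (∀ i ∈ s, x i = y i) → g x = g y := by
      intro x y h
      exact Finset.prod_congr rfl fun i hi => by rw [h i hi]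
    have hdisj : Disjoint ({j} : Finset (Fin m)) s := Finset.disjoint_singleton_left.mpr hj
    have key : ∫ ω, f (fun i => X i ω) * g (fun i => X i ω) ∂ℙ
        ≤ (∫ ω, f (fun i => X i ω) ∂ℙ) * ∫ ω, g (fun i => X i ω) ∂ℙ := by
      rcases hc with hc | hc
      · have hfm : Monotone f := fun x y hxy =>
          Real.exp_le_exp.mpr (mul_le_mul_of_nonneg_left (hxy j) (hc j))
        have hgm : Monotone g := fun x y hxy =>
          Finset.prod_le_prod (fun i _ => (Real.exp_pos _).le)
            (fun i _ => Real.exp_le_exp.mpr (mul_le_mul_of_nonneg_left (hxy i) (hc i)))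
        exact hNA {j} s hdisj f g hfm hgm hfA hgB
      · have hfm : Monotone (fun x => -f x) := by
          intro x y hxy
          simp only [neg_le_neg_iff]
          exact Real.exp_le_exp.mpr (mul_le_mul_of_nonpos_left (hxy j) (hc j))
        have hgm : Monotone (fun x => -g x) := by
          intro x y hxy
          simp only [neg_le_neg_iff]
          exact Finset.prod_le_prod (fun i _ => (Real.exp_pos _).le)
            (fun i _ => Real.exp_le_exp.mpr (mul_le_mul_of_nonpos_left (hxy i) (hc i)))
        have := hNA {j} s hdisj (fun x => -f x) (fun x => -g x) hfm hgm
          (fun x y h => by simp only [neg_inj]; exact hfA x y h)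
          (fun x y h => by simp only [neg_inj]; exact hgB x y h)
        simp only [neg_mul_neg, integral_neg, neg_mul_neg] at this
        exact this
    have hfnn : (0:ℝ) ≤ ∫ ω, f (fun i => X i ω) ∂ℙ :=
      integral_nonneg fun ω => (Real.exp_pos _).le
    calc ∫ ω, ∏ i ∈ insert j s, Real.exp (c i * X i ω) ∂ℙ
        = ∫ ω, f (fun i => X i ω) * g (fun i => X i ω) ∂ℙ := by
          simp_rw [Finset.prod_insert hj]; rfl
      _ ≤ (∫ ω, f (fun i => X i ω) ∂ℙ) * ∫ ω, g (fun i => X i ω) ∂ℙ := key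
      _ ≤ (∫ ω, f (fun i => X i ω) ∂ℙ) * ∏ i ∈ s, ∫ ω, Real.exp (c i * X i ω) ∂ℙ :=
          mul_le_mul_of_nonneg_left IH hfnn
      _ = ∏ i ∈ insert j s, ∫ ω, Real.exp (c i * X i ω) ∂ℙ := by
          rw [Finset.prod_insert hj]

lemma integrable_of_bdd {Ω : Type*} [MeasurableSpace Ω] (ℙ : Measure Ω)
    [IsProbabilityMeasure ℙ] {f : Ω → ℝ} (hf : Measurable f) {C : ℝ}
    (hC : ∀ ω, |f ω| ≤ C) : Integrable f ℙ :=
  Integrable.mono' (integrable_const C) hf.aestronglyMeasurable (ae_of_all _ hC)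

lemma na_mgf_bound {Ω : Type*} [MeasurableSpace Ω] (ℙ : Measure Ω)
    [IsProbabilityMeasure ℙ] {m : ℕ}
    (X : Fin m → Ω → ℝ) (hXmeas : ∀ i, Measurable (X i))
    (hX01 : ∀ i ω, X i ω = 0 ∨ X i ω = 1)
    (p : Fin m → ℝ) (hmean : ∀ i, ∫ ω, X i ω ∂ℙ = p i)
    (hNA : ∀ (A B : Finset (Fin m)), Disjoint A B →
      ∀ f g : (Fin m → ℝ) → ℝ, Monotone f → Monotone g →
      (∀ x y : Fin m → ℝ, (∀ i ∈ A, x i = y i) → f x = f y) →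
      (∀ x y : Fin m → ℝ, (∀ i ∈ B, x i = y i) → g x = g y) →
      ∫ ω, f (fun i => X i ω) * g (fun i => X i ω) ∂ℙ
        ≤ (∫ ω, f (fun i => X i ω) ∂ℙ) * ∫ ω, g (fun i => X i ω) ∂ℙ)
    (a : Fin m → ℝ) (ha : ∀ i, a i ∈ Set.Icc (0 : ℝ) 1) (t' : ℝ) :
    ∫ ω, Real.exp (t' * ∑ i, a i * X i ω) ∂ℙ
      ≤ Real.exp (t' * (∑ i, a i * p i) + t' ^ 2 * (∑ i, (a i) ^ 2) / 8) := by
  have hXint : ∀ i, Integrable (X i) ℙ := by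
    intro i
    refine integrable_of_bdd ℙ (hXmeas i) (C := 1) fun ω => ?_
    rcases hX01 i ω with h | h <;> simp [h]
  have hp0 : ∀ i, 0 ≤ p i := by
    intro i
    rw [← hmean i]
    exact integral_nonneg fun ω => by rcases hX01 i ω with h | h <;> simp [h]
  have hp1 : ∀ i, p i ≤ 1 := by
    intro i
    rw [← hmean i]
    calc ∫ ω, X i ω ∂ℙ ≤ ∫ _ω, (1:ℝ) ∂ℙ := by
          apply integral_mono (hXint i) (integrable_const 1)
          intro ω; rcases hX01 i ω with h | h <;> simp [h]
      _ = 1 := by simp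
  have hmgf_i : ∀ (c : ℝ) (i : Fin m),
      ∫ ω, Real.exp (c * X i ω) ∂ℙ = 1 - p i + p i * Real.exp c := by
    intro c i
    have hpt : ∀ ω, Real.exp (c * X i ω) = 1 + (Real.exp c - 1) * X i ω := by
      intro ω; rcases hX01 i ω with h | h <;> simp [h]
    simp_rw [hpt]
    rw [integral_add (integrable_const 1) ((hXint i).const_mul _), integral_const,
      integral_const_mul, hmean i]
    simp; ring
  have hc : (∀ i, 0 ≤ t' * a i) ∨ (∀ i, t' * a i ≤ 0) := by
    rcases le_total 0 t' with h | h
    · exact Or.inl fun i => mul_nonneg h (ha i).1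
    · exact Or.inr fun i => mul_nonpos_of_nonpos_of_nonneg h (ha i).1
  have key := na_prod_exp ℙ X hNA (fun i => t' * a i) hc Finset.univ
  calc ∫ ω, Real.exp (t' * ∑ i, a i * X i ω) ∂ℙ
      = ∫ ω, ∏ i, Real.exp ((t' * a i) * X i ω) ∂ℙ := by
        congr 1; funext ω
        rw [Finset.mul_sum, Real.exp_sum]
        exact Finset.prod_congr rfl fun i _ => by rw [mul_assoc]
    _ ≤ ∏ i, ∫ ω, Real.exp ((t' * a i) * X i ω) ∂ℙ := key
    _ = ∏ i, (1 - p i + p i * Real.exp (t' * a i)) :=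
        Finset.prod_congr rfl fun i _ => hmgf_i _ i
    _ ≤ ∏ i, Real.exp (p i * (t' * a i) + (t' * a i) ^ 2 / 8) := by
        apply Finset.prod_le_prod
        · intro i _
          have := (Real.exp_pos (t' * a i)).le
          nlinarith [hp0 i, hp1 i, mul_nonneg (hp0 i) this]
        · intro i _
          exact bernoulli_mgf_bound (hp0 i) (hp1 i) _
    _ = Real.exp (∑ i, (p i * (t' * a i) + (t' * a i) ^ 2 / 8)) := (Real.exp_sum _ _).symm
    _ = Real.exp (t' * (∑ i, a i * p i) + t' ^ 2 * (∑ i, (a i) ^ 2) / 8) := by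
        congr 1
        rw [Finset.sum_add_distrib, Finset.mul_sum]
        congr 1
        · exact Finset.sum_congr rfl fun i _ => by ring
        · rw [show t' ^ 2 * (∑ i, (a i) ^ 2) / 8 = ∑ i, (t' ^ 2 / 8) * (a i) ^ 2 by
            rw [← Finset.mul_sum]; ring]
          exact Finset.sum_congr rfl fun i _ => by ring

/-- Hoeffding's inequality for negatively associated `{0,1}`-valued
random variables: if `X 1, …, X m` are NA with means `p i` and `a i ∈ [0,1]` are
fixed weights, then `Y = ∑ a i X i` with mean `μ = ∑ a i p i` satisfies
`Pr[Y − μ ≥ z] ≤ exp(−2z²/∑ a_i²)` and `Pr[μ − Y ≥ z] ≤ exp(−2z²/∑ a_i²)`. -/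
theorem stmt10 {Ω : Type*} [MeasurableSpace Ω] (ℙ : Measure Ω)
    [IsProbabilityMeasure ℙ] {m : ℕ}
    (X : Fin m → Ω → ℝ) (hXmeas : ∀ i, Measurable (X i))
    (hX01 : ∀ i ω, X i ω = 0 ∨ X i ω = 1)
    (p : Fin m → ℝ) (hmean : ∀ i, ∫ ω, X i ω ∂ℙ = p i)
    -- negative association: for disjoint index sets `A, B` and coordinatewise
    -- nondecreasing functions `f, g` depending only on the `A`- resp.
    -- `B`-coordinates, the covariance is nonpositive.
    (hNA : ∀ (A B : Finset (Fin m)), Disjoint A B →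
      ∀ f g : (Fin m → ℝ) → ℝ, Monotone f → Monotone g →
      (∀ x y : Fin m → ℝ, (∀ i ∈ A, x i = y i) → f x = f y) →
      (∀ x y : Fin m → ℝ, (∀ i ∈ B, x i = y i) → g x = g y) →
      ∫ ω, f (fun i => X i ω) * g (fun i => X i ω) ∂ℙ
        ≤ (∫ ω, f (fun i => X i ω) ∂ℙ) * ∫ ω, g (fun i => X i ω) ∂ℙ)
    (a : Fin m → ℝ) (ha : ∀ i, a i ∈ Set.Icc (0 : ℝ) 1)
    (z : ℝ) (hz : 0 < z) :
    (ℙ {ω | z ≤ (∑ i, a i * X i ω) - ∑ i, a i * p i}).toReal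
        ≤ Real.exp (-(2 * z ^ 2) / ∑ i, (a i) ^ 2) ∧
    (ℙ {ω | z ≤ (∑ i, a i * p i) - ∑ i, a i * X i ω}).toReal
        ≤ Real.exp (-(2 * z ^ 2) / ∑ i, (a i) ^ 2) := by
  have hS0 : (0:ℝ) ≤ ∑ i, (a i) ^ 2 := Finset.sum_nonneg fun i _ => sq_nonneg _
  rcases eq_or_lt_of_le hS0 with hSz | hSpos
  · have h1 : Real.exp (-(2 * z ^ 2) / ∑ i, (a i) ^ 2) = 1 := by
      rw [← hSz, div_zero, Real.exp_zero]
    constructor <;>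
      (rw [h1]; simpa using ENNReal.toReal_mono ENNReal.one_ne_top prob_le_one)
  · set S : ℝ := ∑ i, (a i) ^ 2 with hSdef
    set μv : ℝ := ∑ i, a i * p i with hμdef
    set t : ℝ := 4 * z / S with htdef
    have hSne : S ≠ 0 := ne_of_gt hSpos
    have ht : 0 ≤ t := by positivity
    have hYmeas : Measurable (fun ω => ∑ i, a i * X i ω) :=
      Finset.measurable_sum _ fun i _ => (hXmeas i).const_mul (a i)
    have hA0 : (0:ℝ) ≤ ∑ i, a i := Finset.sum_nonneg fun i _ => (ha i).1
    have hYbdd : ∀ ω, 0 ≤ (∑ i, a i * X i ω) ∧ (∑ i, a i * X i ω) ≤ ∑ i, a i := by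
      intro ω
      constructor
      · apply Finset.sum_nonneg
        intro i _
        rcases hX01 i ω with h | h <;> simp [h, (ha i).1]
      · apply Finset.sum_le_sum
        intro i _
        rcases hX01 i ω with h | h <;> simp [h, (ha i).1, (ha i).2]
    have habs : ∀ (v : ℝ), |v - μv| ≤ (∑ i, a i) + |μv| → True := fun _ _ => trivial
    have hbd : ∀ (r : ℝ) (Yval : ℝ), 0 ≤ Yval → Yval ≤ ∑ i, a i →
        r ≤ |r| * ((∑ i, a i) + |μv|) ∨ True := fun _ _ _ _ => Or.inr trivial
    -- integrability of the two exponential integrands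
    have hint1 : Integrable (fun ω => Real.exp (t * ((∑ i, a i * X i ω) - μv))) ℙ := by
      refine integrable_of_bdd ℙ
        (Real.measurable_exp.comp ((hYmeas.sub_const μv).const_mul t))
        (C := Real.exp (|t| * ((∑ i, a i) + |μv|))) fun ω => ?_
      rw [abs_of_pos (Real.exp_pos _)]
      apply Real.exp_le_exp.mpr
      obtain ⟨h1, h2⟩ := hYbdd ω
      have habs2 : |(∑ i, a i * X i ω) - μv| ≤ (∑ i, a i) + |μv| :=
        abs_le.mpr ⟨by linarith [le_abs_self μv], by linarith [neg_abs_le μv]⟩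
      calc t * ((∑ i, a i * X i ω) - μv) ≤ |t * ((∑ i, a i * X i ω) - μv)| := le_abs_self _
        _ = |t| * |(∑ i, a i * X i ω) - μv| := abs_mul _ _
        _ ≤ |t| * ((∑ i, a i) + |μv|) := mul_le_mul_of_nonneg_left habs2 (abs_nonneg t)
    have hint2 : Integrable (fun ω => Real.exp (t * (μv - ∑ i, a i * X i ω))) ℙ := by
      refine integrable_of_bdd ℙ
        (Real.measurable_exp.comp (((measurable_const.sub hYmeas)).const_mul t))
        (C := Real.exp (|t| * ((∑ i, a i) + |μv|))) fun ω => ?_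
      rw [abs_of_pos (Real.exp_pos _)]
      apply Real.exp_le_exp.mpr
      obtain ⟨h1, h2⟩ := hYbdd ω
      have habs2 : |μv - ∑ i, a i * X i ω| ≤ (∑ i, a i) + |μv| :=
        abs_le.mpr ⟨by linarith [neg_abs_le μv], by linarith [le_abs_self μv]⟩
      calc t * (μv - ∑ i, a i * X i ω) ≤ |t * (μv - ∑ i, a i * X i ω)| := le_abs_self _
        _ = |t| * |μv - ∑ i, a i * X i ω| := abs_mul _ _
        _ ≤ |t| * ((∑ i, a i) + |μv|) := mul_le_mul_of_nonneg_left habs2 (abs_nonneg t)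
    have hexp_eq : Real.exp (-t * z + t ^ 2 * S / 8) = Real.exp (-(2 * z ^ 2) / S) := by
      congr 1
      rw [htdef]
      field_simp
      ring
    constructor
    · -- upper tail
      have hupper := ProbabilityTheory.measure_ge_le_exp_mul_mgf
        (μ := ℙ) (X := fun ω => (∑ i, a i * X i ω) - μv) z ht hint1
      have hmgfU : ProbabilityTheory.mgf (fun ω => (∑ i, a i * X i ω) - μv) ℙ t
          ≤ Real.exp (t ^ 2 * S / 8) := by
        rw [ProbabilityTheory.mgf]
        have hpt : ∀ ω, Real.exp (t * ((∑ i, a i * X i ω) - μv))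
            = Real.exp (t * ∑ i, a i * X i ω) / Real.exp (t * μv) := by
          intro ω; rw [mul_sub, Real.exp_sub]
        simp_rw [hpt]
        rw [integral_div, div_le_iff₀ (Real.exp_pos _)]
        calc ∫ ω, Real.exp (t * ∑ i, a i * X i ω) ∂ℙ
            ≤ Real.exp (t * μv + t ^ 2 * S / 8) :=
              na_mgf_bound ℙ X hXmeas hX01 p hmean hNA a ha t
          _ = Real.exp (t ^ 2 * S / 8) * Real.exp (t * μv) := by
              rw [← Real.exp_add]; ring_nf
      calc (ℙ {ω | z ≤ (∑ i, a i * X i ω) - ∑ i, a i * p i}).toReal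
          ≤ Real.exp (-t * z) * ProbabilityTheory.mgf
              (fun ω => (∑ i, a i * X i ω) - μv) ℙ t := hupper
        _ ≤ Real.exp (-t * z) * Real.exp (t ^ 2 * S / 8) :=
            mul_le_mul_of_nonneg_left hmgfU (Real.exp_pos _).le
        _ = Real.exp (-t * z + t ^ 2 * S / 8) := (Real.exp_add _ _).symm
        _ = Real.exp (-(2 * z ^ 2) / S) := hexp_eq
    · -- lower tail
      have hlower := ProbabilityTheory.measure_ge_le_exp_mul_mgf
        (μ := ℙ) (X := fun ω => μv - ∑ i, a i * X i ω) z ht hint2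
      have hmgfL : ProbabilityTheory.mgf (fun ω => μv - ∑ i, a i * X i ω) ℙ t
          ≤ Real.exp (t ^ 2 * S / 8) := by
        rw [ProbabilityTheory.mgf]
        have hpt : ∀ ω, Real.exp (t * (μv - ∑ i, a i * X i ω))
            = Real.exp ((-t) * ∑ i, a i * X i ω) * Real.exp (t * μv) := by
          intro ω; rw [← Real.exp_add]; congr 1; ring
        simp_rw [hpt]
        rw [integral_mul_const]
        calc (∫ ω, Real.exp ((-t) * ∑ i, a i * X i ω) ∂ℙ) * Real.exp (t * μv)
            ≤ Real.exp ((-t) * μv + (-t) ^ 2 * S / 8) * Real.exp (t * μv) :=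
              mul_le_mul_of_nonneg_right
                (na_mgf_bound ℙ X hXmeas hX01 p hmean hNA a ha (-t))
                (Real.exp_pos _).le
          _ = Real.exp (t ^ 2 * S / 8) := by
              rw [← Real.exp_add]; congr 1; ring
      calc (ℙ {ω | z ≤ (∑ i, a i * p i) - ∑ i, a i * X i ω}).toReal
          ≤ Real.exp (-t * z) * ProbabilityTheory.mgf
              (fun ω => μv - ∑ i, a i * X i ω) ℙ t := hlower
        _ ≤ Real.exp (-t * z) * Real.exp (t ^ 2 * S / 8) :=
            mul_le_mul_of_nonneg_left hmgfL (Real.exp_pos _).le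
        _ = Real.exp (-t * z + t ^ 2 * S / 8) := (Real.exp_add _ _).symm
        _ = Real.exp (-(2 * z ^ 2) / S) := hexp_eq
end

section
/- Let d̃ ∈ [0,1]^n, γ ∈ [0,1], m_i = max(0, d̃_i − γ), M_i = min(1, d̃_i + γ), and let 𝔇 = {d ∈ [0,1]^n : m_i ≤ d_i ≤ M_i for all i, Σ_i d_i = Σ_i d̃_i}. Fix a group G ⊆ {1,…,n} and weights p_i ∈ [0,1]. Then there is a minimizer d* of Σ_{i∈G} p_i d_i over d ∈ 𝔇 such that for all i,j ∈ G with p_i < p_j, d*_j > m_j implies d*_i = M_i. -/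
/-- Exchange argument underlying Greedy-Best-Response. With
`m i = max(0, d̃ i − γ)`, `M i = min(1, d̃ i + γ)` and
`𝔇 = {d ∈ [0,1]^n : m ≤ d ≤ M, ∑ d = ∑ d̃}`, for any group `G` and weights
`p ∈ [0,1]^n`, there is a minimizer `d*` of `∑_{i∈G} p i d i` over `𝔇` such
that for all `i, j ∈ G` with `p i < p j`, if `d* j > m j` then `d* i = M i`. -/
theorem stmt17 {n : ℕ} (dt : Fin n → ℝ) (hdt : ∀ i, dt i ∈ Set.Icc (0 : ℝ) 1)
    (γ : ℝ) (hγ : γ ∈ Set.Icc (0 : ℝ) 1)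
    (G : Finset (Fin n)) (p : Fin n → ℝ) (hp : ∀ i, p i ∈ Set.Icc (0 : ℝ) 1) :
    let m : Fin n → ℝ := fun i => max 0 (dt i - γ)
    let M : Fin n → ℝ := fun i => min 1 (dt i + γ)
    let 𝔇 : Set (Fin n → ℝ) :=
      {d | (∀ i, m i ≤ d i ∧ d i ≤ M i) ∧ ∑ i, d i = ∑ i, dt i}
    ∃ dstar ∈ 𝔇,
      (∀ d ∈ 𝔇, ∑ i ∈ G, p i * dstar i ≤ ∑ i ∈ G, p i * d i) ∧
      ∀ i ∈ G, ∀ j ∈ G, p i < p j → m j < dstar j → dstar i = M i := by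
  intro m M 𝔇
  have hne : dt ∈ 𝔇 := by
    refine ⟨fun i => ⟨max_le (hdt i).1 (by linarith [hγ.1]),
      le_min (hdt i).2 (by linarith [hγ.1])⟩, rfl⟩
  have hDeq : 𝔇 = Set.Icc m M ∩ {d | ∑ i, d i = ∑ i, dt i} := by
    ext d
    simp [𝔇, Set.mem_Icc, Pi.le_def, forall_and, Set.mem_inter_iff, and_assoc]
  have hcomp : IsCompact 𝔇 := by
    rw [hDeq]
    exact isCompact_Icc.inter_right
      (isClosed_eq (by continuity) continuous_const)
  have hcont : Continuous (fun d : Fin n → ℝ => ∑ i ∈ G, p i * d i) := by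
    continuity
  obtain ⟨dstar, hmem, hmin⟩ := hcomp.exists_isMinOn ⟨dt, hne⟩ hcont.continuousOn
  have hmin' : ∀ d ∈ 𝔇, ∑ i ∈ G, p i * dstar i ≤ ∑ i ∈ G, p i * d i :=
    fun d hd => isMinOn_iff.mp hmin d hd
  refine ⟨dstar, hmem, hmin', ?_⟩
  intro i hi j hj hpij hmj
  by_contra hMi
  have hlt : dstar i < M i := lt_of_le_of_ne (hmem.1 i).2 hMi
  set ε := min (dstar j - m j) (M i - dstar i) with hε
  have hεpos : 0 < ε := lt_min (by linarith) (by linarith)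
  have hε1 : ε ≤ dstar j - m j := min_le_left _ _
  have hε2 : ε ≤ M i - dstar i := min_le_right _ _
  have hij : i ≠ j := fun h => by rw [h] at hpij; exact lt_irrefl _ hpij
  set d' : Fin n → ℝ :=
    fun k => dstar k + (if k = i then ε else 0) - (if k = j then ε else 0)
    with hd'
  have hd'mem : d' ∈ 𝔇 := by
    constructor
    · intro k
      have hb := hmem.1 k
      simp only [hd']
      split_ifs with ha hb' hb'
      · exact absurd (ha.symm.trans hb') hij
      · subst ha
        exact ⟨by linarith [hb.1], by linarith [hb.2]⟩
      · subst hb'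
        exact ⟨by linarith [hb.1], by linarith [hb.2]⟩
      · exact ⟨by linarith [hb.1], by linarith [hb.2]⟩
    · have hs : ∑ k, d' k = ∑ k, dstar k := by
        simp only [hd']
        rw [Finset.sum_sub_distrib, Finset.sum_add_distrib]
        rw [Finset.sum_ite_eq' Finset.univ i (fun _ => ε),
          Finset.sum_ite_eq' Finset.univ j (fun _ => ε)]
        simp
      rw [hs, hmem.2]
  have hobj : ∑ k ∈ G, p k * d' k < ∑ k ∈ G, p k * dstar k := by
    have heq : ∑ k ∈ G, p k * d' k
        = ∑ k ∈ G, p k * dstar k + p i * ε - p j * ε := by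
      simp only [hd', mul_sub, mul_add, mul_ite, mul_zero]
      rw [Finset.sum_sub_distrib, Finset.sum_add_distrib,
        Finset.sum_ite_eq' G i (fun k => p k * ε),
        Finset.sum_ite_eq' G j (fun k => p k * ε)]
      simp [hi, hj]
    rw [heq]
    nlinarith
  exact absurd (hmin' d' hd'mem) (not_le.mpr hobj)
end
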